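/- Let Γ_{ij}^k (with Γ_{ij}^k = Γ_{ji}^k) be smooth real-valued functions on a connected open set U ⊆ ℝ², defining a torsion-free connection ∇, with Ricci tensor ρ and symmetrized Ricci tensor ρ^s. If f is a smooth function on U that is an affine gradient Ricci soliton, i.e. H(f)_{ij} + ρ^s_{ij} = 0 for all i,j, and X is an affine Killing vector field for ∇, then the function Xf = Σ_l X^l ∂_l f satisfies H(Xf) = 0, i.e. Xf is an affine gradient Yamabe soliton. -/

import Mathlib

noncomputable section

/-- The coordinate directions of ℝ². -/
def ee : Fin 2 → ℝ × ℝ := ![(1, 0), (0, 1)]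

/-- Partial derivative `∂_i f`. -/
def pd (i : Fin 2) (f : ℝ × ℝ → ℝ) : ℝ × ℝ → ℝ :=
  fun p => fderiv ℝ f p (ee i)

/-- Ricci tensor of a torsion-free connection with variable Christoffel symbols
`Γ i j k : ℝ×ℝ → ℝ`. -/
def ricciV (Γ : Fin 2 → Fin 2 → Fin 2 → ℝ × ℝ → ℝ) (j k : Fin 2) : ℝ × ℝ → ℝ :=
  fun p => (∑ i, (pd i (Γ j k i) p - pd j (Γ i k i) p))
    + ∑ i, ∑ q, (Γ i q i p * Γ j k q p - Γ j q i p * Γ i k q p)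

/-- Symmetrized Ricci tensor. -/
def ricciSymV (Γ : Fin 2 → Fin 2 → Fin 2 → ℝ × ℝ → ℝ) (i j : Fin 2) : ℝ × ℝ → ℝ :=
  fun p => (ricciV Γ i j p + ricciV Γ j i p) / 2

/-- Hessian `H(f)_{ij} = ∂_i∂_j f − Σ_k Γ_{ij}^k ∂_k f`. -/
def hessV (Γ : Fin 2 → Fin 2 → Fin 2 → ℝ × ℝ → ℝ) (f : ℝ × ℝ → ℝ) (i j : Fin 2) :
    ℝ × ℝ → ℝ :=
  fun p => pd i (pd j f) p - ∑ k, Γ i j k p * pd k f p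

section toolkit
variable {U : Set (ℝ × ℝ)} {p : ℝ × ℝ} {a b g h : ℝ × ℝ → ℝ} {i : Fin 2}

theorem pd_zero : pd i (fun _ => (0:ℝ)) p = 0 := by
  unfold pd; simp

variable {U : Set (ℝ × ℝ)} {p : ℝ × ℝ} {a b g h : ℝ × ℝ → ℝ} {i : Fin 2}

theorem pd_congr (i : Fin 2) (hU : IsOpen U) (hp : p ∈ U) (hgh : Set.EqOn g h U) :
    pd i g p = pd i h p := by
  unfold pd
  rw [(hgh.eventuallyEq_of_mem (hU.mem_nhds hp)).fderiv_eq]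

theorem pd_add (ha : DifferentiableAt ℝ a p) (hb : DifferentiableAt ℝ b p) :
    pd i (fun q => a q + b q) p = pd i a p + pd i b p := by
  unfold pd; rw [fderiv_fun_add ha hb]; rfl

theorem pd_sub (ha : DifferentiableAt ℝ a p) (hb : DifferentiableAt ℝ b p) :
    pd i (fun q => a q - b q) p = pd i a p - pd i b p := by
  unfold pd; rw [fderiv_fun_sub ha hb]; rfl

theorem pd_mul (ha : DifferentiableAt ℝ a p) (hb : DifferentiableAt ℝ b p) :
    pd i (fun q => a q * b q) p = pd i a p * b p + a p * pd i b p := by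
  unfold pd; rw [fderiv_fun_mul ha hb]; simp; ring

theorem pd_div_const (ha : DifferentiableAt ℝ a p) (c : ℝ) :
    pd i (fun q => a q / c) p = pd i a p / c := by
  unfold pd
  simp only [div_eq_mul_inv]
  rw [fderiv_mul_const ha]
  simp [mul_comm]

theorem contDiffOn_pd (hU : IsOpen U) (hg : ContDiffOn ℝ (⊤ : ℕ∞) g U) (i : Fin 2) :
    ContDiffOn ℝ (⊤ : ℕ∞) (pd i g) U := by
  have h1 : ContDiffOn ℝ (⊤ : ℕ∞) (fderiv ℝ g) U := hg.fderiv_of_isOpen hU (by simp)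
  exact h1.clm_apply contDiffOn_const

theorem diffAt (hU : IsOpen U) (hp : p ∈ U) (hg : ContDiffOn ℝ (⊤ : ℕ∞) g U) :
    DifferentiableAt ℝ g p :=
  (hg.contDiffAt (hU.mem_nhds hp)).differentiableAt (by simp)

theorem pd_comm (hU : IsOpen U) (hp : p ∈ U) (hg : ContDiffOn ℝ (⊤ : ℕ∞) g U) (a b : Fin 2) :
    pd a (pd b g) p = pd b (pd a g) p := by
  have hsymm : IsSymmSndFDerivAt ℝ g p :=
    (hg.contDiffAt (hU.mem_nhds hp)).isSymmSndFDerivAt (by rw [minSmoothness_of_isRCLikeNormedField]; show ((2 : ℕ∞) : WithTop ℕ∞) ≤ _; exact WithTop.coe_le_coe.mpr le_top)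
  have hd : DifferentiableAt ℝ (fderiv ℝ g) p :=
    ((hg.fderiv_of_isOpen (m := ((⊤ : ℕ∞) : WithTop ℕ∞)) hU (by simp)).contDiffAt (hU.mem_nhds hp)).differentiableAt (by simp)
  have h1 : ∀ (c d : Fin 2), pd c (pd d g) p = fderiv ℝ (fderiv ℝ g) p (ee c) (ee d) := by
    intro c d
    unfold pd
    rw [fderiv_clm_apply hd (differentiableAt_const _)]
    simp
  rw [h1, h1, hsymm (ee a) (ee b)]

end toolkit

set_option maxHeartbeats 4000000 in
/-- if `f` is an affine gradient Ricci soliton and `X` an affine Killing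
field on a connected open set `U`, then `Xf` is an affine gradient Yamabe soliton,
i.e. `H(Xf) = 0` on `U`. -/
theorem stmt12 (U : Set (ℝ × ℝ)) (hUopen : IsOpen U) (hUconn : IsConnected U)
    (Γ : Fin 2 → Fin 2 → Fin 2 → ℝ × ℝ → ℝ)
    (hΓsmooth : ∀ i j k, ContDiffOn ℝ (⊤ : ℕ∞) (Γ i j k) U)
    (hΓsym : ∀ i j k, ∀ p ∈ U, Γ i j k p = Γ j i k p)
    (f : ℝ × ℝ → ℝ) (hf : ContDiffOn ℝ (⊤ : ℕ∞) f U)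
    (X : Fin 2 → ℝ × ℝ → ℝ) (hX : ∀ k, ContDiffOn ℝ (⊤ : ℕ∞) (X k) U)
    (hsol : ∀ i j : Fin 2, ∀ p ∈ U, hessV Γ f i j p + ricciSymV Γ i j p = 0)
    (hkill : ∀ i j k : Fin 2, ∀ p ∈ U,
      pd i (pd j (X k)) p
        + ∑ l, (X l p * pd l (Γ i j k) p + Γ l j k p * pd i (X l) p
            + Γ i l k p * pd j (X l) p - Γ i j l p * pd l (X k) p) = 0) :
    ∀ i j : Fin 2, ∀ p ∈ U, hessV Γ (fun q => ∑ l, X l q * pd l f q) i j p = 0 := by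
  intro i j p hp
  have hd1 : DifferentiableAt ℝ (Γ 0 0 0) p := diffAt hUopen hp (hΓsmooth 0 0 0)
  have hd2 : DifferentiableAt ℝ (Γ 0 0 1) p := diffAt hUopen hp (hΓsmooth 0 0 1)
  have hd3 : DifferentiableAt ℝ (Γ 0 1 0) p := diffAt hUopen hp (hΓsmooth 0 1 0)
  have hd4 : DifferentiableAt ℝ (Γ 0 1 1) p := diffAt hUopen hp (hΓsmooth 0 1 1)
  have hd5 : DifferentiableAt ℝ (Γ 1 0 0) p := diffAt hUopen hp (hΓsmooth 1 0 0)
  have hd6 : DifferentiableAt ℝ (Γ 1 0 1) p := diffAt hUopen hp (hΓsmooth 1 0 1)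
  have hd7 : DifferentiableAt ℝ (Γ 1 1 0) p := diffAt hUopen hp (hΓsmooth 1 1 0)
  have hd8 : DifferentiableAt ℝ (Γ 1 1 1) p := diffAt hUopen hp (hΓsmooth 1 1 1)
  have hd9 : DifferentiableAt ℝ (pd 0 (Γ 0 0 0)) p := diffAt hUopen hp (contDiffOn_pd hUopen (hΓsmooth 0 0 0) 0)
  have hd10 : DifferentiableAt ℝ (pd 0 (Γ 0 0 1)) p := diffAt hUopen hp (contDiffOn_pd hUopen (hΓsmooth 0 0 1) 0)
  have hd11 : DifferentiableAt ℝ (pd 0 (Γ 0 1 0)) p := diffAt hUopen hp (contDiffOn_pd hUopen (hΓsmooth 0 1 0) 0)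
  have hd12 : DifferentiableAt ℝ (pd 0 (Γ 0 1 1)) p := diffAt hUopen hp (contDiffOn_pd hUopen (hΓsmooth 0 1 1) 0)
  have hd13 : DifferentiableAt ℝ (pd 0 (Γ 1 0 0)) p := diffAt hUopen hp (contDiffOn_pd hUopen (hΓsmooth 1 0 0) 0)
  have hd14 : DifferentiableAt ℝ (pd 0 (Γ 1 0 1)) p := diffAt hUopen hp (contDiffOn_pd hUopen (hΓsmooth 1 0 1) 0)
  have hd15 : DifferentiableAt ℝ (pd 0 (Γ 1 1 0)) p := diffAt hUopen hp (contDiffOn_pd hUopen (hΓsmooth 1 1 0) 0)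
  have hd16 : DifferentiableAt ℝ (pd 0 (Γ 1 1 1)) p := diffAt hUopen hp (contDiffOn_pd hUopen (hΓsmooth 1 1 1) 0)
  have hd17 : DifferentiableAt ℝ (pd 1 (Γ 0 0 0)) p := diffAt hUopen hp (contDiffOn_pd hUopen (hΓsmooth 0 0 0) 1)
  have hd18 : DifferentiableAt ℝ (pd 1 (Γ 0 0 1)) p := diffAt hUopen hp (contDiffOn_pd hUopen (hΓsmooth 0 0 1) 1)
  have hd19 : DifferentiableAt ℝ (pd 1 (Γ 0 1 0)) p := diffAt hUopen hp (contDiffOn_pd hUopen (hΓsmooth 0 1 0) 1)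
  have hd20 : DifferentiableAt ℝ (pd 1 (Γ 0 1 1)) p := diffAt hUopen hp (contDiffOn_pd hUopen (hΓsmooth 0 1 1) 1)
  have hd21 : DifferentiableAt ℝ (pd 1 (Γ 1 0 0)) p := diffAt hUopen hp (contDiffOn_pd hUopen (hΓsmooth 1 0 0) 1)
  have hd22 : DifferentiableAt ℝ (pd 1 (Γ 1 0 1)) p := diffAt hUopen hp (contDiffOn_pd hUopen (hΓsmooth 1 0 1) 1)
  have hd23 : DifferentiableAt ℝ (pd 1 (Γ 1 1 0)) p := diffAt hUopen hp (contDiffOn_pd hUopen (hΓsmooth 1 1 0) 1)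
  have hd24 : DifferentiableAt ℝ (pd 1 (Γ 1 1 1)) p := diffAt hUopen hp (contDiffOn_pd hUopen (hΓsmooth 1 1 1) 1)
  have hd25 : DifferentiableAt ℝ (X 0) p := diffAt hUopen hp (hX 0)
  have hd26 : DifferentiableAt ℝ (X 1) p := diffAt hUopen hp (hX 1)
  have hd27 : DifferentiableAt ℝ (pd 0 (X 0)) p := diffAt hUopen hp (contDiffOn_pd hUopen (hX 0) 0)
  have hd28 : DifferentiableAt ℝ (pd 0 (X 1)) p := diffAt hUopen hp (contDiffOn_pd hUopen (hX 1) 0)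
  have hd29 : DifferentiableAt ℝ (pd 1 (X 0)) p := diffAt hUopen hp (contDiffOn_pd hUopen (hX 0) 1)
  have hd30 : DifferentiableAt ℝ (pd 1 (X 1)) p := diffAt hUopen hp (contDiffOn_pd hUopen (hX 1) 1)
  have hd31 : DifferentiableAt ℝ (pd 0 (pd 0 (X 0))) p := diffAt hUopen hp (contDiffOn_pd hUopen (contDiffOn_pd hUopen (hX 0) 0) 0)
  have hd32 : DifferentiableAt ℝ (pd 0 (pd 0 (X 1))) p := diffAt hUopen hp (contDiffOn_pd hUopen (contDiffOn_pd hUopen (hX 1) 0) 0)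
  have hd33 : DifferentiableAt ℝ (pd 0 (pd 1 (X 0))) p := diffAt hUopen hp (contDiffOn_pd hUopen (contDiffOn_pd hUopen (hX 0) 1) 0)
  have hd34 : DifferentiableAt ℝ (pd 0 (pd 1 (X 1))) p := diffAt hUopen hp (contDiffOn_pd hUopen (contDiffOn_pd hUopen (hX 1) 1) 0)
  have hd35 : DifferentiableAt ℝ (pd 1 (pd 0 (X 0))) p := diffAt hUopen hp (contDiffOn_pd hUopen (contDiffOn_pd hUopen (hX 0) 0) 1)
  have hd36 : DifferentiableAt ℝ (pd 1 (pd 0 (X 1))) p := diffAt hUopen hp (contDiffOn_pd hUopen (contDiffOn_pd hUopen (hX 1) 0) 1)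
  have hd37 : DifferentiableAt ℝ (pd 1 (pd 1 (X 0))) p := diffAt hUopen hp (contDiffOn_pd hUopen (contDiffOn_pd hUopen (hX 0) 1) 1)
  have hd38 : DifferentiableAt ℝ (pd 1 (pd 1 (X 1))) p := diffAt hUopen hp (contDiffOn_pd hUopen (contDiffOn_pd hUopen (hX 1) 1) 1)
  have hd39 : DifferentiableAt ℝ (pd 0 f) p := diffAt hUopen hp (contDiffOn_pd hUopen hf 0)
  have hd40 : DifferentiableAt ℝ (pd 1 f) p := diffAt hUopen hp (contDiffOn_pd hUopen hf 1)
  have hd41 : DifferentiableAt ℝ (pd 0 (pd 0 f)) p := diffAt hUopen hp (contDiffOn_pd hUopen (contDiffOn_pd hUopen hf 0) 0)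
  have hd42 : DifferentiableAt ℝ (pd 0 (pd 1 f)) p := diffAt hUopen hp (contDiffOn_pd hUopen (contDiffOn_pd hUopen hf 1) 0)
  have hd43 : DifferentiableAt ℝ (pd 1 (pd 0 f)) p := diffAt hUopen hp (contDiffOn_pd hUopen (contDiffOn_pd hUopen hf 0) 1)
  have hd44 : DifferentiableAt ℝ (pd 1 (pd 1 f)) p := diffAt hUopen hp (contDiffOn_pd hUopen (contDiffOn_pd hUopen hf 1) 1)
  have hz00 : Set.EqOn (fun q => hessV Γ f 0 0 q + ricciSymV Γ 0 0 q) (fun _ => (0:ℝ)) U := fun q hq => hsol 0 0 q hq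
  have hz01 : Set.EqOn (fun q => hessV Γ f 0 1 q + ricciSymV Γ 0 1 q) (fun _ => (0:ℝ)) U := fun q hq => hsol 0 1 q hq
  have hz10 : Set.EqOn (fun q => hessV Γ f 1 0 q + ricciSymV Γ 1 0 q) (fun _ => (0:ℝ)) U := fun q hq => hsol 1 0 q hq
  have hz11 : Set.EqOn (fun q => hessV Γ f 1 1 q + ricciSymV Γ 1 1 q) (fun _ => (0:ℝ)) U := fun q hq => hsol 1 1 q hq
  have kz000 : Set.EqOn (fun q => pd 0 (pd 0 (X 0)) q + ∑ m, (X m q * pd m (Γ 0 0 0) q + Γ m 0 0 q * pd 0 (X m) q + Γ 0 m 0 q * pd 0 (X m) q - Γ 0 0 m q * pd m (X 0) q)) (fun _ => (0:ℝ)) U := fun q hq => hkill 0 0 0 q hq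
  have kz001 : Set.EqOn (fun q => pd 0 (pd 0 (X 1)) q + ∑ m, (X m q * pd m (Γ 0 0 1) q + Γ m 0 1 q * pd 0 (X m) q + Γ 0 m 1 q * pd 0 (X m) q - Γ 0 0 m q * pd m (X 1) q)) (fun _ => (0:ℝ)) U := fun q hq => hkill 0 0 1 q hq
  have kz010 : Set.EqOn (fun q => pd 0 (pd 1 (X 0)) q + ∑ m, (X m q * pd m (Γ 0 1 0) q + Γ m 1 0 q * pd 0 (X m) q + Γ 0 m 0 q * pd 1 (X m) q - Γ 0 1 m q * pd m (X 0) q)) (fun _ => (0:ℝ)) U := fun q hq => hkill 0 1 0 q hq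
  have kz011 : Set.EqOn (fun q => pd 0 (pd 1 (X 1)) q + ∑ m, (X m q * pd m (Γ 0 1 1) q + Γ m 1 1 q * pd 0 (X m) q + Γ 0 m 1 q * pd 1 (X m) q - Γ 0 1 m q * pd m (X 1) q)) (fun _ => (0:ℝ)) U := fun q hq => hkill 0 1 1 q hq
  have kz100 : Set.EqOn (fun q => pd 1 (pd 0 (X 0)) q + ∑ m, (X m q * pd m (Γ 1 0 0) q + Γ m 0 0 q * pd 1 (X m) q + Γ 1 m 0 q * pd 0 (X m) q - Γ 1 0 m q * pd m (X 0) q)) (fun _ => (0:ℝ)) U := fun q hq => hkill 1 0 0 q hq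
  have kz101 : Set.EqOn (fun q => pd 1 (pd 0 (X 1)) q + ∑ m, (X m q * pd m (Γ 1 0 1) q + Γ m 0 1 q * pd 1 (X m) q + Γ 1 m 1 q * pd 0 (X m) q - Γ 1 0 m q * pd m (X 1) q)) (fun _ => (0:ℝ)) U := fun q hq => hkill 1 0 1 q hq
  have kz110 : Set.EqOn (fun q => pd 1 (pd 1 (X 0)) q + ∑ m, (X m q * pd m (Γ 1 1 0) q + Γ m 1 0 q * pd 1 (X m) q + Γ 1 m 0 q * pd 1 (X m) q - Γ 1 1 m q * pd m (X 0) q)) (fun _ => (0:ℝ)) U := fun q hq => hkill 1 1 0 q hq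
  have kz111 : Set.EqOn (fun q => pd 1 (pd 1 (X 1)) q + ∑ m, (X m q * pd m (Γ 1 1 1) q + Γ m 1 1 q * pd 1 (X m) q + Γ 1 m 1 q * pd 1 (X m) q - Γ 1 1 m q * pd m (X 1) q)) (fun _ => (0:ℝ)) U := fun q hq => hkill 1 1 1 q hq
  have hGf0 : Set.EqOn (Γ 1 0 0) (Γ 0 1 0) U := fun q hq => hΓsym 1 0 0 q hq
  have hGf1 : Set.EqOn (Γ 1 0 1) (Γ 0 1 1) U := fun q hq => hΓsym 1 0 1 q hq
  have hEq0 : Set.EqOn (pd 0 (fun q => X 0 q * pd 0 f q + X 1 q * pd 1 f q)) (fun q => pd 0 (X 0) q * pd 0 f q + X 0 q * pd 0 (pd 0 f) q + (pd 0 (X 1) q * pd 1 f q + X 1 q * pd 0 (pd 1 f) q)) U := by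
    intro q hq
    have e1 : DifferentiableAt ℝ (X 0) q := diffAt hUopen hq (hX 0)
    have e2 : DifferentiableAt ℝ (X 1) q := diffAt hUopen hq (hX 1)
    have e3 : DifferentiableAt ℝ (pd 0 f) q := diffAt hUopen hq (contDiffOn_pd hUopen hf 0)
    have e4 : DifferentiableAt ℝ (pd 1 f) q := diffAt hUopen hq (contDiffOn_pd hUopen hf 1)
    simp (disch := fun_prop) only [pd_add, pd_mul]
    try ring
  have hEq1 : Set.EqOn (pd 1 (fun q => X 0 q * pd 0 f q + X 1 q * pd 1 f q)) (fun q => pd 1 (X 0) q * pd 0 f q + X 0 q * pd 1 (pd 0 f) q + (pd 1 (X 1) q * pd 1 f q + X 1 q * pd 1 (pd 1 f) q)) U := by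
    intro q hq
    have e1 : DifferentiableAt ℝ (X 0) q := diffAt hUopen hq (hX 0)
    have e2 : DifferentiableAt ℝ (X 1) q := diffAt hUopen hq (hX 1)
    have e3 : DifferentiableAt ℝ (pd 0 f) q := diffAt hUopen hq (contDiffOn_pd hUopen hf 0)
    have e4 : DifferentiableAt ℝ (pd 1 f) q := diffAt hUopen hq (contDiffOn_pd hUopen hf 1)
    simp (disch := fun_prop) only [pd_add, pd_mul]
    try ring
  have A00 := hsol 0 0 p hp
  simp only [hessV, ricciSymV, ricciV, Fin.sum_univ_two] at A00
  have A01 := hsol 0 1 p hp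
  simp only [hessV, ricciSymV, ricciV, Fin.sum_univ_two] at A01
  have A10 := hsol 1 0 p hp
  simp only [hessV, ricciSymV, ricciV, Fin.sum_univ_two] at A10
  have A11 := hsol 1 1 p hp
  simp only [hessV, ricciSymV, ricciV, Fin.sum_univ_two] at A11
  have B000 := pd_congr 0 hUopen hp hz00
  rw [pd_zero] at B000
  simp only [hessV, ricciSymV, ricciV, Fin.sum_univ_two] at B000
  simp (disch := fun_prop) only [pd_add, pd_sub, pd_mul, pd_div_const] at B000
  have B001 := pd_congr 0 hUopen hp hz01
  rw [pd_zero] at B001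
  simp only [hessV, ricciSymV, ricciV, Fin.sum_univ_two] at B001
  simp (disch := fun_prop) only [pd_add, pd_sub, pd_mul, pd_div_const] at B001
  have B010 := pd_congr 0 hUopen hp hz10
  rw [pd_zero] at B010
  simp only [hessV, ricciSymV, ricciV, Fin.sum_univ_two] at B010
  simp (disch := fun_prop) only [pd_add, pd_sub, pd_mul, pd_div_const] at B010
  have B011 := pd_congr 0 hUopen hp hz11
  rw [pd_zero] at B011
  simp only [hessV, ricciSymV, ricciV, Fin.sum_univ_two] at B011
  simp (disch := fun_prop) only [pd_add, pd_sub, pd_mul, pd_div_const] at B011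
  have B100 := pd_congr 1 hUopen hp hz00
  rw [pd_zero] at B100
  simp only [hessV, ricciSymV, ricciV, Fin.sum_univ_two] at B100
  simp (disch := fun_prop) only [pd_add, pd_sub, pd_mul, pd_div_const] at B100
  have B101 := pd_congr 1 hUopen hp hz01
  rw [pd_zero] at B101
  simp only [hessV, ricciSymV, ricciV, Fin.sum_univ_two] at B101
  simp (disch := fun_prop) only [pd_add, pd_sub, pd_mul, pd_div_const] at B101
  have B110 := pd_congr 1 hUopen hp hz10
  rw [pd_zero] at B110
  simp only [hessV, ricciSymV, ricciV, Fin.sum_univ_two] at B110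
  simp (disch := fun_prop) only [pd_add, pd_sub, pd_mul, pd_div_const] at B110
  have B111 := pd_congr 1 hUopen hp hz11
  rw [pd_zero] at B111
  simp only [hessV, ricciSymV, ricciV, Fin.sum_univ_two] at B111
  simp (disch := fun_prop) only [pd_add, pd_sub, pd_mul, pd_div_const] at B111
  have C000 := hkill 0 0 0 p hp
  simp only [Fin.sum_univ_two] at C000
  have C001 := hkill 0 0 1 p hp
  simp only [Fin.sum_univ_two] at C001
  have C010 := hkill 0 1 0 p hp
  simp only [Fin.sum_univ_two] at C010
  have C011 := hkill 0 1 1 p hp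
  simp only [Fin.sum_univ_two] at C011
  have C100 := hkill 1 0 0 p hp
  simp only [Fin.sum_univ_two] at C100
  have C101 := hkill 1 0 1 p hp
  simp only [Fin.sum_univ_two] at C101
  have C110 := hkill 1 1 0 p hp
  simp only [Fin.sum_univ_two] at C110
  have C111 := hkill 1 1 1 p hp
  simp only [Fin.sum_univ_two] at C111
  have CG2000 : pd 1 (pd 0 (Γ 0 0 0)) p = pd 0 (pd 1 (Γ 0 0 0)) p := pd_comm hUopen hp (hΓsmooth 0 0 0) 1 0
  have CG2001 : pd 1 (pd 0 (Γ 0 0 1)) p = pd 0 (pd 1 (Γ 0 0 1)) p := pd_comm hUopen hp (hΓsmooth 0 0 1) 1 0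
  have CG2010 : pd 1 (pd 0 (Γ 0 1 0)) p = pd 0 (pd 1 (Γ 0 1 0)) p := pd_comm hUopen hp (hΓsmooth 0 1 0) 1 0
  have CG2011 : pd 1 (pd 0 (Γ 0 1 1)) p = pd 0 (pd 1 (Γ 0 1 1)) p := pd_comm hUopen hp (hΓsmooth 0 1 1) 1 0
  have CG2100 : pd 1 (pd 0 (Γ 1 0 0)) p = pd 0 (pd 1 (Γ 1 0 0)) p := pd_comm hUopen hp (hΓsmooth 1 0 0) 1 0
  have CG2101 : pd 1 (pd 0 (Γ 1 0 1)) p = pd 0 (pd 1 (Γ 1 0 1)) p := pd_comm hUopen hp (hΓsmooth 1 0 1) 1 0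
  have CG2110 : pd 1 (pd 0 (Γ 1 1 0)) p = pd 0 (pd 1 (Γ 1 1 0)) p := pd_comm hUopen hp (hΓsmooth 1 1 0) 1 0
  have CG2111 : pd 1 (pd 0 (Γ 1 1 1)) p = pd 0 (pd 1 (Γ 1 1 1)) p := pd_comm hUopen hp (hΓsmooth 1 1 1) 1 0
  have CX3o00 : pd 1 (pd 0 (pd 0 (X 0))) p = pd 0 (pd 1 (pd 0 (X 0))) p := pd_comm hUopen hp (contDiffOn_pd hUopen (hX 0) 0) 1 0
  have CX3o01 : pd 1 (pd 0 (pd 0 (X 1))) p = pd 0 (pd 1 (pd 0 (X 1))) p := pd_comm hUopen hp (contDiffOn_pd hUopen (hX 1) 0) 1 0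
  have CX3o10 : pd 1 (pd 0 (pd 1 (X 0))) p = pd 0 (pd 1 (pd 1 (X 0))) p := pd_comm hUopen hp (contDiffOn_pd hUopen (hX 0) 1) 1 0
  have CX3o11 : pd 1 (pd 0 (pd 1 (X 1))) p = pd 0 (pd 1 (pd 1 (X 1))) p := pd_comm hUopen hp (contDiffOn_pd hUopen (hX 1) 1) 1 0
  have Cf3o0 : pd 1 (pd 0 (pd 0 f)) p = pd 0 (pd 1 (pd 0 f)) p := pd_comm hUopen hp (contDiffOn_pd hUopen hf 0) 1 0
  have Cf3o1 : pd 1 (pd 0 (pd 1 f)) p = pd 0 (pd 1 (pd 1 f)) p := pd_comm hUopen hp (contDiffOn_pd hUopen hf 1) 1 0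
  have D0100 := pd_congr 0 hUopen hp kz100
  rw [pd_zero] at D0100
  simp only [Fin.sum_univ_two] at D0100
  simp (disch := fun_prop) only [pd_add, pd_sub, pd_mul] at D0100
  have D0101 := pd_congr 0 hUopen hp kz101
  rw [pd_zero] at D0101
  simp only [Fin.sum_univ_two] at D0101
  simp (disch := fun_prop) only [pd_add, pd_sub, pd_mul] at D0101
  have D0110 := pd_congr 0 hUopen hp kz110
  rw [pd_zero] at D0110
  simp only [Fin.sum_univ_two] at D0110
  simp (disch := fun_prop) only [pd_add, pd_sub, pd_mul] at D0110
  have D0111 := pd_congr 0 hUopen hp kz111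
  rw [pd_zero] at D0111
  simp only [Fin.sum_univ_two] at D0111
  simp (disch := fun_prop) only [pd_add, pd_sub, pd_mul] at D0111
  have D1000 := pd_congr 1 hUopen hp kz000
  rw [pd_zero] at D1000
  simp only [Fin.sum_univ_two] at D1000
  simp (disch := fun_prop) only [pd_add, pd_sub, pd_mul] at D1000
  have D1001 := pd_congr 1 hUopen hp kz001
  rw [pd_zero] at D1001
  simp only [Fin.sum_univ_two] at D1001
  simp (disch := fun_prop) only [pd_add, pd_sub, pd_mul] at D1001
  have D1010 := pd_congr 1 hUopen hp kz010
  rw [pd_zero] at D1010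
  simp only [Fin.sum_univ_two] at D1010
  simp (disch := fun_prop) only [pd_add, pd_sub, pd_mul] at D1010
  have D1011 := pd_congr 1 hUopen hp kz011
  rw [pd_zero] at D1011
  simp only [Fin.sum_univ_two] at D1011
  simp (disch := fun_prop) only [pd_add, pd_sub, pd_mul] at D1011
  have E10 : pd 0 (fun q => X 0 q * pd 0 f q + X 1 q * pd 1 f q) p = pd 0 (X 0) p * pd 0 f p + X 0 p * pd 0 (pd 0 f) p + (pd 0 (X 1) p * pd 1 f p + X 1 p * pd 0 (pd 1 f) p) := by
    simp (disch := fun_prop) only [pd_add, pd_mul]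
    try ring
  have E11 : pd 1 (fun q => X 0 q * pd 0 f q + X 1 q * pd 1 f q) p = pd 1 (X 0) p * pd 0 f p + X 0 p * pd 1 (pd 0 f) p + (pd 1 (X 1) p * pd 1 f p + X 1 p * pd 1 (pd 1 f) p) := by
    simp (disch := fun_prop) only [pd_add, pd_mul]
    try ring
  have E200 : pd 0 (pd 0 (fun q => X 0 q * pd 0 f q + X 1 q * pd 1 f q)) p = pd 0 (pd 0 (X 0)) p * pd 0 f p + pd 0 (X 0) p * pd 0 (pd 0 f) p + pd 0 (X 0) p * pd 0 (pd 0 f) p + X 0 p * pd 0 (pd 0 (pd 0 f)) p + pd 0 (pd 0 (X 1)) p * pd 1 f p + pd 0 (X 1) p * pd 0 (pd 1 f) p + pd 0 (X 1) p * pd 0 (pd 1 f) p + X 1 p * pd 0 (pd 0 (pd 1 f)) p := by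
    rw [pd_congr 0 hUopen hp hEq0]
    simp (disch := fun_prop) only [pd_add, pd_mul]
    try ring
  have E201 : pd 0 (pd 1 (fun q => X 0 q * pd 0 f q + X 1 q * pd 1 f q)) p = pd 0 (pd 1 (X 0)) p * pd 0 f p + pd 1 (X 0) p * pd 0 (pd 0 f) p + pd 0 (X 0) p * pd 1 (pd 0 f) p + X 0 p * pd 0 (pd 1 (pd 0 f)) p + pd 0 (pd 1 (X 1)) p * pd 1 f p + pd 1 (X 1) p * pd 0 (pd 1 f) p + pd 0 (X 1) p * pd 1 (pd 1 f) p + X 1 p * pd 0 (pd 1 (pd 1 f)) p := by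
    rw [pd_congr 0 hUopen hp hEq1]
    simp (disch := fun_prop) only [pd_add, pd_mul]
    try ring
  have E210 : pd 1 (pd 0 (fun q => X 0 q * pd 0 f q + X 1 q * pd 1 f q)) p = pd 1 (pd 0 (X 0)) p * pd 0 f p + pd 0 (X 0) p * pd 1 (pd 0 f) p + pd 1 (X 0) p * pd 0 (pd 0 f) p + X 0 p * pd 1 (pd 0 (pd 0 f)) p + pd 1 (pd 0 (X 1)) p * pd 1 f p + pd 0 (X 1) p * pd 1 (pd 1 f) p + pd 1 (X 1) p * pd 0 (pd 1 f) p + X 1 p * pd 1 (pd 0 (pd 1 f)) p := by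
    rw [pd_congr 1 hUopen hp hEq0]
    simp (disch := fun_prop) only [pd_add, pd_mul]
    try ring
  have E211 : pd 1 (pd 1 (fun q => X 0 q * pd 0 f q + X 1 q * pd 1 f q)) p = pd 1 (pd 1 (X 0)) p * pd 0 f p + pd 1 (X 0) p * pd 1 (pd 0 f) p + pd 1 (X 0) p * pd 1 (pd 0 f) p + X 0 p * pd 1 (pd 1 (pd 0 f)) p + pd 1 (pd 1 (X 1)) p * pd 1 f p + pd 1 (X 1) p * pd 1 (pd 1 f) p + pd 1 (X 1) p * pd 1 (pd 1 f) p + X 1 p * pd 1 (pd 1 (pd 1 f)) p := by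
    rw [pd_congr 1 hUopen hp hEq1]
    simp (disch := fun_prop) only [pd_add, pd_mul]
    try ring
  have Gs0 : Γ 1 0 0 p = Γ 0 1 0 p := hΓsym 1 0 0 p hp
  have Gs1 : Γ 1 0 1 p = Γ 0 1 1 p := hΓsym 1 0 1 p hp
  have dGs00 : pd 0 (Γ 1 0 0) p = pd 0 (Γ 0 1 0) p := pd_congr 0 hUopen hp hGf0
  have dGs01 : pd 0 (Γ 1 0 1) p = pd 0 (Γ 0 1 1) p := pd_congr 0 hUopen hp hGf1
  have dGs10 : pd 1 (Γ 1 0 0) p = pd 1 (Γ 0 1 0) p := pd_congr 1 hUopen hp hGf0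
  have dGs11 : pd 1 (Γ 1 0 1) p = pd 1 (Γ 0 1 1) p := pd_congr 1 hUopen hp hGf1
  rcases (by omega : i = 0 ∨ i = 1) with rfl | rfl <;> rcases (by omega : j = 0 ∨ j = 1) with rfl | rfl <;>
      simp only [hessV, Fin.sum_univ_two]
  · linear_combination
      (1 : ℝ) * (X 1 p) * (Γ 0 1 0 p) * A00
      + (-1 : ℝ) * (X 1 p) * (Γ 1 0 0 p) * A00
      + (2 : ℝ) * (pd 0 (X 0) p) * A00
      + (1 : ℝ) * (X 0 p) * (Γ 0 0 1 p) * A01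
      + (-1 : ℝ) * (X 1 p) * (Γ 0 0 0 p) * A01
      + (1 : ℝ) * (X 1 p) * (Γ 0 1 1 p) * A01
      + (-1 : ℝ) * (X 1 p) * (Γ 1 0 1 p) * A01
      + (2 : ℝ) * (pd 0 (X 1) p) * A01
      + (-1 : ℝ) * (X 0 p) * (Γ 0 0 1 p) * A10
      + (1 : ℝ) * (X 1 p) * (Γ 0 0 0 p) * A10
      + (1 : ℝ) * (X 0 p) * B000
      + (1 : ℝ) * (X 1 p) * B001
      + (-1 : ℝ) * (X 1 p) * B010
      + (1 : ℝ) * (X 1 p) * B100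
      + (1 : ℝ) * (pd 0 f p) * C000
      + (-1 : ℝ) * (Γ 1 0 1 p) * C000
      + (1 : ℝ) * (pd 1 f p) * C001
      + (1 : ℝ) * (Γ 1 0 0 p) * C001
      + (-1 : ℝ) * (Γ 1 1 1 p) * C001
      + (-1 : ℝ) * (Γ 0 0 1 p) * C010
      + (2 : ℝ) * (Γ 0 0 1 p) * C100
      + (-1 : ℝ) * (Γ 0 0 0 p) * C101
      + (1 : ℝ) * (Γ 0 1 1 p) * C101
      + (1 : ℝ) * (Γ 1 0 1 p) * C101
      + (-1 : ℝ) * (Γ 0 0 1 p) * C111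
      + (1 : ℝ) * (X 0 p) * CG2001
      + (1 : ℝ) * (X 1 p) * CG2101
      + (1 : ℝ) * CX3o01
      + (-1 : ℝ) * (X 1 p) * Cf3o0
      + (1 : ℝ) * D0101
      + (-1 : ℝ) * D1001
      + (-1 : ℝ) * (Γ 0 0 0 p) * E10
      + (-1 : ℝ) * (Γ 0 0 1 p) * E11
      + (1 : ℝ) * E200
      + (-1 : ℝ) * (X 0 p) * (pd 0 f p) * (Γ 0 0 1 p) * Gs0
      + (-1 : ℝ) * (X 1 p) * (pd 0 (Γ 0 1 1) p) * Gs0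
      + (1 : ℝ) * (X 1 p) * (pd 1 (Γ 0 0 1) p) * Gs0
      + (-1 : ℝ) * (X 1 p) * (pd 1 f p) * (Γ 0 0 1 p) * Gs0
      + (1 : ℝ) * (X 1 p) * (Γ 0 0 0 p) * (Γ 1 0 1 p) * Gs0
      + (-1 : ℝ) * (X 1 p) * (Γ 0 0 1 p) * (Γ 1 0 0 p) * Gs0
      + (1 : ℝ) * (X 1 p) * (Γ 0 0 1 p) * (Γ 1 1 1 p) * Gs0
      + (-1 : ℝ) * (X 1 p) * (Γ 0 1 1 p) * (Γ 1 0 1 p) * Gs0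
      + (-1 : ℝ) * (pd 0 (X 1) p) * (pd 0 f p) * Gs0
      + (1 : ℝ) * (pd 0 (X 1) p) * (Γ 1 0 1 p) * Gs0
      + (-1 : ℝ) * (pd 1 (X 1) p) * (Γ 0 0 1 p) * Gs0
      + (-1 : ℝ) * (X 0 p) * (pd 1 f p) * (Γ 0 0 1 p) * Gs1
      + ((1 : ℝ)/2) * (X 1 p) * (pd 0 (Γ 0 1 0) p) * Gs1
      + ((-1 : ℝ)/2) * (X 1 p) * (pd 0 (Γ 1 1 1) p) * Gs1
      + (-1 : ℝ) * (X 1 p) * (pd 0 f p) * (Γ 0 1 0 p) * Gs1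
      + ((-1 : ℝ)/2) * (X 1 p) * (pd 1 (Γ 0 0 0) p) * Gs1
      + ((1 : ℝ)/2) * (X 1 p) * (pd 1 (Γ 0 1 1) p) * Gs1
      + (1 : ℝ) * (X 1 p) * (pd 1 f p) * (Γ 0 0 0 p) * Gs1
      + (-1 : ℝ) * (X 1 p) * (pd 1 f p) * (Γ 0 1 1 p) * Gs1
      + (-1 : ℝ) * (X 1 p) * (Γ 0 0 1 p) * (Γ 1 1 0 p) * Gs1
      + (1 : ℝ) * (X 1 p) * (Γ 0 1 0 p) * (Γ 1 0 1 p) * Gs1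
      + (-1 : ℝ) * (pd 0 (X 0) p) * (Γ 1 0 1 p) * Gs1
      + (-1 : ℝ) * (pd 0 (X 1) p) * (pd 1 f p) * Gs1
      + (1 : ℝ) * (pd 1 (X 0) p) * (Γ 0 0 1 p) * Gs1
      + (-1 : ℝ) * (X 0 p) * (Γ 0 0 1 p) * dGs00
      + (-1 : ℝ) * (X 1 p) * (pd 0 f p) * dGs00
      + ((-1 : ℝ)/2) * (X 1 p) * (Γ 0 1 1 p) * dGs00
      + ((1 : ℝ)/2) * (X 1 p) * (Γ 1 0 1 p) * dGs00
      + (-1 : ℝ) * (X 0 p) * (Γ 1 0 1 p) * dGs01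
      + (-1 : ℝ) * (X 1 p) * (pd 1 f p) * dGs01
      + (1 : ℝ) * (X 1 p) * (Γ 0 1 0 p) * dGs01
      + (-1 : ℝ) * (X 1 p) * (Γ 1 0 0 p) * dGs01
      + (-1 : ℝ) * (X 1 p) * (Γ 0 0 1 p) * dGs10
      + (-1 : ℝ) * (X 1 p) * (Γ 1 0 1 p) * dGs11
  · linear_combination
      (-1 : ℝ) * (X 0 p) * (Γ 0 1 0 p) * A00
      + (1 : ℝ) * (X 0 p) * (Γ 1 0 0 p) * A00
      + (1 : ℝ) * (pd 1 (X 0) p) * A00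
      + (1 : ℝ) * (X 0 p) * (Γ 1 0 1 p) * A01
      + (-1 : ℝ) * (X 1 p) * (Γ 0 1 0 p) * A01
      + (1 : ℝ) * (pd 1 (X 1) p) * A01
      + (-1 : ℝ) * (X 0 p) * (Γ 0 1 1 p) * A10
      + (1 : ℝ) * (X 1 p) * (Γ 0 1 0 p) * A10
      + (1 : ℝ) * (pd 0 (X 0) p) * A10
      + (1 : ℝ) * (pd 0 (X 1) p) * A11
      + (1 : ℝ) * (X 0 p) * B010
      + (1 : ℝ) * (X 1 p) * B101
      + (1 : ℝ) * (Γ 1 1 0 p) * C001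
      + (1 : ℝ) * (pd 0 f p) * C010
      + ((1 : ℝ)/2) * (Γ 0 0 0 p) * C010
      + ((-1 : ℝ)/2) * (Γ 0 1 1 p) * C010
      + (-1 : ℝ) * (Γ 1 0 1 p) * C010
      + (1 : ℝ) * (pd 1 f p) * C011
      + ((1 : ℝ)/2) * (Γ 1 0 0 p) * C011
      + ((-1 : ℝ)/2) * (Γ 1 1 1 p) * C011
      + ((-1 : ℝ)/2) * (Γ 0 0 0 p) * C100
      + ((1 : ℝ)/2) * (Γ 0 1 1 p) * C100
      + (-1 : ℝ) * (Γ 0 1 0 p) * C101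
      + ((-1 : ℝ)/2) * (Γ 1 0 0 p) * C101
      + ((1 : ℝ)/2) * (Γ 1 1 1 p) * C101
      + (1 : ℝ) * (Γ 0 0 1 p) * C110
      + ((-1 : ℝ)/2) * (X 0 p) * CG2000
      + ((1 : ℝ)/2) * (X 0 p) * CG2011
      + ((-1 : ℝ)/2) * (X 1 p) * CG2100
      + ((1 : ℝ)/2) * (X 1 p) * CG2111
      + ((-1 : ℝ)/2) * CX3o00
      + ((1 : ℝ)/2) * CX3o11
      + (-1 : ℝ) * (X 1 p) * Cf3o1
      + ((-1 : ℝ)/2) * D0100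
      + ((1 : ℝ)/2) * D0111
      + ((1 : ℝ)/2) * D1000
      + ((-1 : ℝ)/2) * D1011
      + (-1 : ℝ) * (Γ 0 1 0 p) * E10
      + (-1 : ℝ) * (Γ 0 1 1 p) * E11
      + (1 : ℝ) * E201
      + (1 : ℝ) * (X 0 p) * (pd 0 (Γ 0 1 1) p) * Gs0
      + (1 : ℝ) * (X 0 p) * (pd 0 f p) * (Γ 0 0 0 p) * Gs0
      + (-1 : ℝ) * (X 0 p) * (pd 0 f p) * (Γ 0 1 1 p) * Gs0
      + (-1 : ℝ) * (X 0 p) * (pd 1 (Γ 0 0 1) p) * Gs0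
      + (1 : ℝ) * (X 0 p) * (pd 1 f p) * (Γ 0 0 1 p) * Gs0
      + (-1 : ℝ) * (X 0 p) * (Γ 0 0 0 p) * (Γ 1 0 1 p) * Gs0
      + (1 : ℝ) * (X 0 p) * (Γ 0 0 1 p) * (Γ 1 0 0 p) * Gs0
      + (-1 : ℝ) * (X 0 p) * (Γ 0 0 1 p) * (Γ 1 1 1 p) * Gs0
      + (1 : ℝ) * (X 0 p) * (Γ 0 1 1 p) * (Γ 1 0 1 p) * Gs0
      + (1 : ℝ) * (X 1 p) * (pd 0 f p) * (Γ 0 1 0 p) * Gs0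
      + (1 : ℝ) * (pd 0 (X 0) p) * (pd 0 f p) * Gs0
      + ((-1 : ℝ)/2) * (pd 0 (X 0) p) * (Γ 0 1 1 p) * Gs0
      + ((1 : ℝ)/2) * (pd 0 (X 0) p) * (Γ 1 0 1 p) * Gs0
      + ((-1 : ℝ)/2) * (pd 0 (X 1) p) * (Γ 1 0 0 p) * Gs0
      + ((1 : ℝ)/2) * (pd 0 (X 1) p) * (Γ 1 1 1 p) * Gs0
      + ((1 : ℝ)/2) * (pd 1 (X 1) p) * (Γ 0 0 0 p) * Gs0
      + ((-1 : ℝ)/2) * (pd 1 (X 1) p) * (Γ 0 1 1 p) * Gs0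
      + ((-1 : ℝ)/2) * (X 0 p) * (pd 0 (Γ 0 1 0) p) * Gs1
      + ((1 : ℝ)/2) * (X 0 p) * (pd 0 (Γ 1 1 1) p) * Gs1
      + (1 : ℝ) * (X 0 p) * (pd 0 f p) * (Γ 0 1 0 p) * Gs1
      + ((1 : ℝ)/2) * (X 0 p) * (pd 1 (Γ 0 0 0) p) * Gs1
      + ((-1 : ℝ)/2) * (X 0 p) * (pd 1 (Γ 0 1 1) p) * Gs1
      + (1 : ℝ) * (X 0 p) * (Γ 0 0 1 p) * (Γ 1 1 0 p) * Gs1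
      + (-1 : ℝ) * (X 0 p) * (Γ 0 1 0 p) * (Γ 1 0 1 p) * Gs1
      + (1 : ℝ) * (X 1 p) * (pd 1 f p) * (Γ 0 1 0 p) * Gs1
      + (1 : ℝ) * (pd 0 (X 0) p) * (pd 1 f p) * Gs1
      + ((1 : ℝ)/2) * (pd 0 (X 0) p) * (Γ 0 1 0 p) * Gs1
      + ((-1 : ℝ)/2) * (pd 0 (X 0) p) * (Γ 1 1 1 p) * Gs1
      + ((-1 : ℝ)/2) * (pd 1 (X 0) p) * (Γ 0 0 0 p) * Gs1
      + ((1 : ℝ)/2) * (pd 1 (X 0) p) * (Γ 0 1 1 p) * Gs1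
      + (1 : ℝ) * (X 0 p) * (pd 0 f p) * dGs00
      + ((1 : ℝ)/2) * (X 0 p) * (Γ 0 0 0 p) * dGs00
      + ((-1 : ℝ)/2) * (X 0 p) * (Γ 1 0 1 p) * dGs00
      + (1 : ℝ) * (X 0 p) * (pd 1 f p) * dGs01
      + (-1 : ℝ) * (X 0 p) * (Γ 0 1 0 p) * dGs01
      + ((3 : ℝ)/2) * (X 0 p) * (Γ 1 0 0 p) * dGs01
      + ((-1 : ℝ)/2) * (X 0 p) * (Γ 1 1 1 p) * dGs01
      + ((1 : ℝ)/2) * (X 1 p) * (Γ 0 0 0 p) * dGs10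
      + ((-1 : ℝ)/2) * (X 1 p) * (Γ 0 1 1 p) * dGs10
      + ((1 : ℝ)/2) * (X 1 p) * (Γ 1 0 0 p) * dGs11
      + ((-1 : ℝ)/2) * (X 1 p) * (Γ 1 1 1 p) * dGs11
  · linear_combination
      (1 : ℝ) * (pd 1 (X 0) p) * A00
      + (1 : ℝ) * (X 0 p) * (Γ 1 0 1 p) * A01
      + (-1 : ℝ) * (X 1 p) * (Γ 1 0 0 p) * A01
      + (1 : ℝ) * (pd 1 (X 1) p) * A01
      + (-1 : ℝ) * (X 0 p) * (Γ 1 0 1 p) * A10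
      + (1 : ℝ) * (X 1 p) * (Γ 0 1 0 p) * A10
      + (1 : ℝ) * (pd 0 (X 0) p) * A10
      + (1 : ℝ) * (X 1 p) * (Γ 0 1 1 p) * A11
      + (-1 : ℝ) * (X 1 p) * (Γ 1 0 1 p) * A11
      + (1 : ℝ) * (pd 0 (X 1) p) * A11
      + (1 : ℝ) * (X 0 p) * B010
      + (1 : ℝ) * (X 1 p) * B101
      + (1 : ℝ) * (Γ 1 1 0 p) * C001
      + ((1 : ℝ)/2) * (Γ 0 0 0 p) * C010
      + ((-1 : ℝ)/2) * (Γ 0 1 1 p) * C010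
      + (-1 : ℝ) * (Γ 1 0 1 p) * C010
      + ((1 : ℝ)/2) * (Γ 1 0 0 p) * C011
      + ((-1 : ℝ)/2) * (Γ 1 1 1 p) * C011
      + (1 : ℝ) * (pd 0 f p) * C100
      + ((-1 : ℝ)/2) * (Γ 0 0 0 p) * C100
      + ((1 : ℝ)/2) * (Γ 0 1 1 p) * C100
      + (1 : ℝ) * (pd 1 f p) * C101
      + (-1 : ℝ) * (Γ 0 1 0 p) * C101
      + ((-1 : ℝ)/2) * (Γ 1 0 0 p) * C101
      + ((1 : ℝ)/2) * (Γ 1 1 1 p) * C101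
      + (1 : ℝ) * (Γ 0 0 1 p) * C110
      + ((-1 : ℝ)/2) * (X 0 p) * CG2000
      + ((1 : ℝ)/2) * (X 0 p) * CG2011
      + ((-1 : ℝ)/2) * (X 1 p) * CG2100
      + ((1 : ℝ)/2) * (X 1 p) * CG2111
      + ((-1 : ℝ)/2) * CX3o00
      + ((1 : ℝ)/2) * CX3o11
      + (1 : ℝ) * (X 0 p) * Cf3o0
      + ((-1 : ℝ)/2) * D0100
      + ((1 : ℝ)/2) * D0111
      + ((1 : ℝ)/2) * D1000
      + ((-1 : ℝ)/2) * D1011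
      + (-1 : ℝ) * (Γ 1 0 0 p) * E10
      + (-1 : ℝ) * (Γ 1 0 1 p) * E11
      + (1 : ℝ) * E210
      + (-1 : ℝ) * (X 0 p) * (pd 0 f p) * (Γ 1 0 1 p) * Gs0
      + ((1 : ℝ)/2) * (X 1 p) * (pd 0 (Γ 0 1 0) p) * Gs0
      + ((-1 : ℝ)/2) * (X 1 p) * (pd 0 (Γ 1 1 1) p) * Gs0
      + ((-1 : ℝ)/2) * (X 1 p) * (pd 1 (Γ 0 0 0) p) * Gs0
      + ((1 : ℝ)/2) * (X 1 p) * (pd 1 (Γ 0 1 1) p) * Gs0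
      + (-1 : ℝ) * (X 1 p) * (pd 1 f p) * (Γ 0 1 1 p) * Gs0
      + (-1 : ℝ) * (X 1 p) * (Γ 0 0 1 p) * (Γ 1 1 0 p) * Gs0
      + (1 : ℝ) * (X 1 p) * (Γ 0 1 0 p) * (Γ 0 1 1 p) * Gs0
      + ((-1 : ℝ)/2) * (pd 0 (X 0) p) * (Γ 0 1 1 p) * Gs0
      + ((1 : ℝ)/2) * (pd 0 (X 0) p) * (Γ 1 0 1 p) * Gs0
      + ((-1 : ℝ)/2) * (pd 0 (X 1) p) * (Γ 1 0 0 p) * Gs0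
      + ((1 : ℝ)/2) * (pd 0 (X 1) p) * (Γ 1 1 1 p) * Gs0
      + (-1 : ℝ) * (pd 0 f p) * (pd 1 (X 1) p) * Gs0
      + ((1 : ℝ)/2) * (pd 1 (X 1) p) * (Γ 0 0 0 p) * Gs0
      + ((-1 : ℝ)/2) * (pd 1 (X 1) p) * (Γ 0 1 1 p) * Gs0
      + (-1 : ℝ) * (X 0 p) * (pd 1 f p) * (Γ 1 0 1 p) * Gs1
      + (1 : ℝ) * (X 1 p) * (pd 0 (Γ 1 1 0) p) * Gs1
      + (-1 : ℝ) * (X 1 p) * (pd 0 f p) * (Γ 1 1 0 p) * Gs1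
      + (-1 : ℝ) * (X 1 p) * (pd 1 (Γ 0 1 0) p) * Gs1
      + (1 : ℝ) * (X 1 p) * (pd 1 f p) * (Γ 0 1 0 p) * Gs1
      + (-1 : ℝ) * (X 1 p) * (pd 1 f p) * (Γ 1 1 1 p) * Gs1
      + (1 : ℝ) * (X 1 p) * (Γ 0 0 0 p) * (Γ 1 1 0 p) * Gs1
      + (-1 : ℝ) * (X 1 p) * (Γ 0 1 0 p) * (Γ 0 1 0 p) * Gs1
      + (1 : ℝ) * (X 1 p) * (Γ 0 1 0 p) * (Γ 1 1 1 p) * Gs1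
      + (-1 : ℝ) * (X 1 p) * (Γ 0 1 1 p) * (Γ 1 1 0 p) * Gs1
      + ((1 : ℝ)/2) * (pd 0 (X 0) p) * (Γ 0 1 0 p) * Gs1
      + ((-1 : ℝ)/2) * (pd 0 (X 0) p) * (Γ 1 1 1 p) * Gs1
      + ((-1 : ℝ)/2) * (pd 1 (X 0) p) * (Γ 0 0 0 p) * Gs1
      + ((1 : ℝ)/2) * (pd 1 (X 0) p) * (Γ 0 1 1 p) * Gs1
      + (-1 : ℝ) * (pd 1 (X 1) p) * (pd 1 f p) * Gs1
      + ((1 : ℝ)/2) * (X 0 p) * (Γ 0 0 0 p) * dGs00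
      + ((-1 : ℝ)/2) * (X 0 p) * (Γ 0 1 1 p) * dGs00
      + ((-1 : ℝ)/2) * (X 1 p) * (Γ 0 1 0 p) * dGs00
      + ((1 : ℝ)/2) * (X 1 p) * (Γ 1 0 0 p) * dGs00
      + ((1 : ℝ)/2) * (X 0 p) * (Γ 1 0 0 p) * dGs01
      + ((-1 : ℝ)/2) * (X 0 p) * (Γ 1 1 1 p) * dGs01
      + (-1 : ℝ) * (X 1 p) * (pd 0 f p) * dGs10
      + ((1 : ℝ)/2) * (X 1 p) * (Γ 0 0 0 p) * dGs10
      + ((-1 : ℝ)/2) * (X 1 p) * (Γ 0 1 1 p) * dGs10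
      + (-1 : ℝ) * (X 1 p) * (pd 1 f p) * dGs11
      + ((1 : ℝ)/2) * (X 1 p) * (Γ 1 0 0 p) * dGs11
      + ((-1 : ℝ)/2) * (X 1 p) * (Γ 1 1 1 p) * dGs11
  · linear_combination
      (1 : ℝ) * (X 0 p) * (Γ 1 1 1 p) * A01
      + (-1 : ℝ) * (X 1 p) * (Γ 1 1 0 p) * A01
      + (-1 : ℝ) * (X 0 p) * (Γ 0 1 0 p) * A10
      + (1 : ℝ) * (X 0 p) * (Γ 1 0 0 p) * A10
      + (-1 : ℝ) * (X 0 p) * (Γ 1 1 1 p) * A10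
      + (1 : ℝ) * (X 1 p) * (Γ 1 1 0 p) * A10
      + (2 : ℝ) * (pd 1 (X 0) p) * A10
      + (-1 : ℝ) * (X 0 p) * (Γ 0 1 1 p) * A11
      + (1 : ℝ) * (X 0 p) * (Γ 1 0 1 p) * A11
      + (2 : ℝ) * (pd 1 (X 1) p) * A11
      + (1 : ℝ) * (X 0 p) * B011
      + (-1 : ℝ) * (X 0 p) * B101
      + (1 : ℝ) * (X 0 p) * B110
      + (1 : ℝ) * (X 1 p) * B111
      + (-1 : ℝ) * (Γ 1 1 0 p) * C000
      + (1 : ℝ) * (Γ 0 1 0 p) * C010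
      + (1 : ℝ) * (Γ 1 0 0 p) * C010
      + (-1 : ℝ) * (Γ 1 1 1 p) * C010
      + (2 : ℝ) * (Γ 1 1 0 p) * C011
      + (-1 : ℝ) * (Γ 1 1 0 p) * C101
      + (1 : ℝ) * (pd 0 f p) * C110
      + (-1 : ℝ) * (Γ 0 0 0 p) * C110
      + (1 : ℝ) * (Γ 0 1 1 p) * C110
      + (1 : ℝ) * (pd 1 f p) * C111
      + (-1 : ℝ) * (Γ 0 1 0 p) * C111
      + (-1 : ℝ) * (X 0 p) * CG2010
      + (-1 : ℝ) * (X 1 p) * CG2110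
      + (-1 : ℝ) * CX3o10
      + (1 : ℝ) * (X 0 p) * Cf3o1
      + (-1 : ℝ) * D0110
      + (1 : ℝ) * D1010
      + (-1 : ℝ) * (Γ 1 1 0 p) * E10
      + (-1 : ℝ) * (Γ 1 1 1 p) * E11
      + (1 : ℝ) * E211
      + ((-1 : ℝ)/2) * (X 0 p) * (pd 0 (Γ 0 1 0) p) * Gs0
      + ((1 : ℝ)/2) * (X 0 p) * (pd 0 (Γ 1 1 1) p) * Gs0
      + (1 : ℝ) * (X 0 p) * (pd 0 f p) * (Γ 1 0 0 p) * Gs0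
      + (-1 : ℝ) * (X 0 p) * (pd 0 f p) * (Γ 1 1 1 p) * Gs0
      + ((1 : ℝ)/2) * (X 0 p) * (pd 1 (Γ 0 0 0) p) * Gs0
      + ((-1 : ℝ)/2) * (X 0 p) * (pd 1 (Γ 0 1 1) p) * Gs0
      + (1 : ℝ) * (X 0 p) * (pd 1 f p) * (Γ 1 0 1 p) * Gs0
      + (1 : ℝ) * (X 0 p) * (Γ 0 0 1 p) * (Γ 1 1 0 p) * Gs0
      + (-1 : ℝ) * (X 0 p) * (Γ 0 1 0 p) * (Γ 0 1 1 p) * Gs0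
      + (1 : ℝ) * (X 1 p) * (pd 0 f p) * (Γ 1 1 0 p) * Gs0
      + (-1 : ℝ) * (pd 0 (X 1) p) * (Γ 1 1 0 p) * Gs0
      + (1 : ℝ) * (pd 0 f p) * (pd 1 (X 0) p) * Gs0
      + (1 : ℝ) * (pd 1 (X 1) p) * (Γ 0 1 0 p) * Gs0
      + (-1 : ℝ) * (X 0 p) * (pd 0 (Γ 1 1 0) p) * Gs1
      + (1 : ℝ) * (X 0 p) * (pd 0 f p) * (Γ 1 1 0 p) * Gs1
      + (1 : ℝ) * (X 0 p) * (pd 1 (Γ 0 1 0) p) * Gs1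
      + (-1 : ℝ) * (X 0 p) * (Γ 0 0 0 p) * (Γ 1 1 0 p) * Gs1
      + (1 : ℝ) * (X 0 p) * (Γ 0 1 0 p) * (Γ 0 1 0 p) * Gs1
      + (-1 : ℝ) * (X 0 p) * (Γ 0 1 0 p) * (Γ 1 1 1 p) * Gs1
      + (1 : ℝ) * (X 0 p) * (Γ 0 1 1 p) * (Γ 1 1 0 p) * Gs1
      + (1 : ℝ) * (X 1 p) * (pd 1 f p) * (Γ 1 1 0 p) * Gs1
      + (1 : ℝ) * (pd 0 (X 0) p) * (Γ 1 1 0 p) * Gs1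
      + (1 : ℝ) * (pd 1 (X 0) p) * (pd 1 f p) * Gs1
      + (-1 : ℝ) * (pd 1 (X 0) p) * (Γ 0 1 0 p) * Gs1
      + ((3 : ℝ)/2) * (X 0 p) * (Γ 0 1 0 p) * dGs00
      + ((-1 : ℝ)/2) * (X 0 p) * (Γ 1 0 0 p) * dGs00
      + (1 : ℝ) * (X 0 p) * (Γ 1 1 0 p) * dGs01
      + (1 : ℝ) * (X 0 p) * (pd 0 f p) * dGs10
      + (1 : ℝ) * (X 1 p) * (Γ 0 1 0 p) * dGs10
      + (1 : ℝ) * (X 0 p) * (pd 1 f p) * dGs11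
      + (1 : ℝ) * (X 1 p) * (Γ 1 1 0 p) * dGs11
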